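/- For any ε > 0, the fixed-margin selection rule s_margin^ε is ε-compatible: for any v, w ∈ ℝ^L, if s_margin^ε(v) ∩ s_margin^ε(w) = ∅ then ‖v − w‖ ≥ ε. -/
import Mathlib


noncomputable section

/-- The fixed-margin selection rule
`s_margin^ε(w) = {j ∈ [L] : w_j > max_{ℓ∈[L]} w_ℓ − ε/√2}`. -/
def smargin (L : ℕ) (ε : ℝ) (w : EuclideanSpace ℝ (Fin L)) : Set (Fin L) :=
  {j | ∀ ℓ : Fin L, w ℓ - ε / Real.sqrt 2 < w j}

/-- The fixed-margin selection rule is `ε`-compatible: if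
`s_margin^ε(v) ∩ s_margin^ε(w) = ∅` then `‖v − w‖ ≥ ε`. -/
theorem smargin_compatible (L : ℕ) (hL : 2 ≤ L) (ε : ℝ) (hε : 0 < ε)
    (v w : EuclideanSpace ℝ (Fin L)) (h : smargin L ε v ∩ smargin L ε w = ∅) :
    ε ≤ dist v w := by
  have hL0 : 0 < L := by omega
  haveI : Nonempty (Fin L) := ⟨⟨0, hL0⟩⟩
  have hs2 : (0:ℝ) < Real.sqrt 2 := by positivity
  have hs2sq : Real.sqrt 2 * Real.sqrt 2 = 2 := Real.mul_self_sqrt (by norm_num)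
  have hc : 0 < ε / Real.sqrt 2 := by positivity
  obtain ⟨i, hi⟩ := Finite.exists_max v
  obtain ⟨j, hj⟩ := Finite.exists_max w
  have hiv : i ∈ smargin L ε v := fun ℓ => by have := hi ℓ; linarith
  have hjw : j ∈ smargin L ε w := fun ℓ => by have := hj ℓ; linarith
  have hiw : i ∉ smargin L ε w := fun hx =>
    Set.eq_empty_iff_forall_notMem.mp h i ⟨hiv, hx⟩
  have hjv : j ∉ smargin L ε v := fun hx =>
    Set.eq_empty_iff_forall_notMem.mp h j ⟨hx, hjw⟩
  simp only [smargin, Set.mem_setOf_eq, not_forall, not_lt] at hiw hjv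
  obtain ⟨ℓ1, hℓ1⟩ := hiw
  obtain ⟨ℓ2, hℓ2⟩ := hjv
  have hwi : w i ≤ w j - ε / Real.sqrt 2 := le_trans hℓ1 (by have := hj ℓ1; linarith)
  have hvj : v j ≤ v i - ε / Real.sqrt 2 := le_trans hℓ2 (by have := hi ℓ2; linarith)
  have hkey : (v i - w i) - (v j - w j) ≥ 2 * (ε / Real.sqrt 2) := by linarith
  have hij : i ≠ j := by
    intro hEq
    rw [hEq] at hkey
    linarith
  rw [EuclideanSpace.dist_eq]
  rw [show ε = Real.sqrt (ε ^ 2) from (Real.sqrt_sq hε.le).symm]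
  apply Real.sqrt_le_sqrt
  have hsub : ({i, j} : Finset (Fin L)) ⊆ Finset.univ := Finset.subset_univ _
  have hsum : ∑ ℓ ∈ ({i, j} : Finset (Fin L)), dist (v ℓ) (w ℓ) ^ 2
      ≤ ∑ ℓ, dist (v ℓ) (w ℓ) ^ 2 := by
    apply Finset.sum_le_sum_of_subset_of_nonneg hsub
    intro k _ _
    positivity
  refine le_trans ?_ hsum
  rw [Finset.sum_pair hij]
  have hd1 : dist (v i) (w i) ^ 2 = (v i - w i) ^ 2 := by
    rw [Real.dist_eq, sq_abs]
  have hd2 : dist (v j) (w j) ^ 2 = (v j - w j) ^ 2 := by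
    rw [Real.dist_eq, sq_abs]
  rw [hd1, hd2]
  set a := v i - w i with ha
  set b := v j - w j with hb
  clear_value a b
  have hε2 : (2 * (ε / Real.sqrt 2)) ^ 2 = 2 * ε ^ 2 := by
    rw [mul_pow, div_pow, show Real.sqrt 2 ^ 2 = 2 from by rw [sq]; exact hs2sq]
    ring
  have hsq : (2 * (ε / Real.sqrt 2)) ^ 2 ≤ (a - b) ^ 2 :=
    pow_le_pow_left₀ (by positivity) hkey 2
  have h2 : (a - b) ^ 2 ≤ 2 * (a ^ 2 + b ^ 2) := by nlinarith [sq_nonneg (a + b)]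
  linarith
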